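/- Unbiasedness of the sample variance under complete randomization: for every treatment j with N_j ≥ 2, defining the sample variance s_j² = (1/(N_j−1)) Σ_{i : T(i)=j} (Y_i(j) − p_j)², one has E[s_j²] = S_j². -/

import Mathlib

open Finset

/-- The finset of completely randomized assignments of `N` units to treatments in `J`
with group sizes `Nj`. -/
def assignments (N : ℕ) {J : Type*} [Fintype J] [DecidableEq J] (Nj : J → ℕ) :
    Finset (Fin N → J) :=
  Finset.univ.filter fun T => ∀ j, (Finset.univ.filter fun i => T i = j).card = Nj j

/-- Expectation with respect to the uniform distribution on completely randomized
assignments. -/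
noncomputable def expect {N : ℕ} {J : Type*} [Fintype J] [DecidableEq J]
    (Nj : J → ℕ) (f : (Fin N → J) → ℝ) : ℝ :=
  (∑ T ∈ assignments N Nj, f T) / ((assignments N Nj).card : ℝ)

/-- Variance with respect to the randomization distribution. -/
noncomputable def rvar {N : ℕ} {J : Type*} [Fintype J] [DecidableEq J]
    (Nj : J → ℕ) (f : (Fin N → J) → ℝ) : ℝ :=
  expect Nj fun T => (f T - expect Nj f) ^ 2

/-- Covariance with respect to the randomization distribution. -/
noncomputable def rcov {N : ℕ} {J : Type*} [Fintype J] [DecidableEq J]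
    (Nj : J → ℕ) (f g : (Fin N → J) → ℝ) : ℝ :=
  expect Nj fun T => (f T - expect Nj f) * (g T - expect Nj g)

/-- Observed group mean `p_j` of treatment `j` under assignment `T`. -/
noncomputable def pObs {N : ℕ} {J : Type*} [DecidableEq J]
    (Y : Fin N → J → ℝ) (Nj : J → ℕ) (j : J) (T : Fin N → J) : ℝ :=
  (∑ i ∈ Finset.univ.filter fun i => T i = j, Y i j) / (Nj j : ℝ)

/-- Population mean `P_j`. -/
noncomputable def Pmean {N : ℕ} {J : Type*} (Y : Fin N → J → ℝ) (j : J) : ℝ :=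
  (∑ i, Y i j) / (N : ℝ)

/-- Population variance `S_j²`. -/
noncomputable def S2 {N : ℕ} {J : Type*} (Y : Fin N → J → ℝ) (j : J) : ℝ :=
  (∑ i, (Y i j - Pmean Y j) ^ 2) / ((N : ℝ) - 1)

/-- Variance of unit-level differences `S²_{j-j'}`. -/
noncomputable def S2diff {N : ℕ} {J : Type*} (Y : Fin N → J → ℝ) (j j' : J) : ℝ :=
  (∑ i, (Y i j - Y i j' - (Pmean Y j - Pmean Y j')) ^ 2) / ((N : ℝ) - 1)

/-- Sample variance `s_j²` of the observed outcomes in treatment group `j`. -/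
noncomputable def s2obs {N : ℕ} {J : Type*} [DecidableEq J]
    (Y : Fin N → J → ℝ) (Nj : J → ℕ) (j : J) (T : Fin N → J) : ℝ :=
  (∑ i ∈ Finset.univ.filter fun i => T i = j, (Y i j - pObs Y Nj j T) ^ 2) /
    ((Nj j : ℝ) - 1)


/-!
Both variances are averages of squared differences over ordered pairs of distinct units:
`s_j² = Σ_{i,k ∈ group j} (Y_i - Y_k)² / (2 N_j (N_j - 1))` and likewise for `S_j²` over all
units. Relabelling units by a permutation preserves the randomization, so every pair of
distinct units falls into group `j` equally often; double counting ordered pairs shows this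
happens for the fraction `N_j (N_j - 1) / (N (N - 1))` of the assignments, which is exactly
the ratio of the two normalisations.
-/

theorem Finset.sum_sub_mean_sq_eq_sum_sum_sub_sq {ι K : Type*} [Field K] [CharZero K]
    (s : Finset ι) (x : ι → K) :
    ∑ i ∈ s, (x i - (∑ k ∈ s, x k) / #s) ^ 2 =
      (∑ i ∈ s, ∑ k ∈ s, (x i - x k) ^ 2) / (2 * #s) := by
  rcases s.eq_empty_or_nonempty with rfl | hs
  · simp
  have hn : (#s : K) ≠ 0 := Nat.cast_ne_zero.2 hs.card_pos.ne'
  simp only [sub_sq, sum_add_distrib, sum_sub_distrib, ← mul_sum, ← sum_mul, sum_const,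
    nsmul_eq_mul]
  field_simp
  ring

theorem Finset.sum_sum_filter_eq_sum_card_nsmul {α β M : Type*} [AddCommMonoid M]
    (s : Finset α) (t : Finset β) (r : α → β → Prop) [∀ a b, Decidable (r a b)] (f : β → M) :
    ∑ a ∈ s, ∑ b ∈ t with r a b, f b = ∑ b ∈ t, #{a ∈ s | r a b} • f b :=
  (sum_sum_bipartiteAbove_eq_sum_sum_bipartiteBelow r (s := s) (t := t) fun _ b => f b).trans
    (sum_congr rfl fun _ _ => sum_const _)

theorem Finset.card_offDiag_eq_descFactorial {α : Type*} [DecidableEq α] (s : Finset α) :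
    #s.offDiag = (#s).descFactorial 2 := by
  rw [offDiag_card, Nat.descFactorial_succ, Nat.descFactorial_one, Nat.sub_one_mul]

theorem Equiv.Perm.exists_apply_eq_and_apply_eq {α : Type*} [DecidableEq α] {a a' b b' : α}
    (ha : a ≠ a') (hb : b ≠ b') : ∃ σ : Equiv.Perm α, σ a = b ∧ σ a' = b' := by
  refine ⟨Equiv.swap (Equiv.swap a b a') b' * Equiv.swap a b, ?_, by simp⟩
  have : Equiv.swap a b a' ≠ b := by simpa using (Equiv.swap a b).injective.ne ha.symm
  simp [Equiv.swap_apply_of_ne_of_ne this.symm hb]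

section Assignments

variable {N : ℕ} {J : Type*} [Fintype J] [DecidableEq J] {Nj : J → ℕ}

theorem mem_assignments {T : Fin N → J} :
    T ∈ assignments N Nj ↔ ∀ j, #{i | T i = j} = Nj j := by
  simp [assignments]

theorem comp_perm_mem_assignments {T : Fin N → J} (hT : T ∈ assignments N Nj)
    (σ : Equiv.Perm (Fin N)) : T ∘ σ ∈ assignments N Nj :=
  mem_assignments.2 fun j => by
    rw [← mem_assignments.1 hT j]
    exact card_equiv σ (by simp)

theorem assignments_nonempty (hsum : ∑ j, Nj j = N) : (assignments N Nj).Nonempty := by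
  let e : (Σ j, Fin (Nj j)) ≃ Fin N := Fintype.equivOfCardEq (by simp [hsum])
  refine ⟨fun i => (e.symm i).1, mem_assignments.2 fun j => ?_⟩
  calc #{i | (e.symm i).1 = j} = #{x : Σ j, Fin (Nj j) | x.1 = j} := card_equiv e.symm (by simp)
    _ = Nj j := by
      rw [card_filter, Fintype.sum_sigma]
      simp [apply_ite card]

theorem card_assignments_filter_pair_eq (j : J) {i i' k k' : Fin N} (hi : i ≠ i')
    (hk : k ≠ k') :
    #{T ∈ assignments N Nj | T i = j ∧ T i' = j} =
      #{T ∈ assignments N Nj | T k = j ∧ T k' = j} := by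
  obtain ⟨σ, hσ, hσ'⟩ := Equiv.Perm.exists_apply_eq_and_apply_eq hk hi
  refine card_bij' (fun T _ => T ∘ σ) (fun T _ => T ∘ σ.symm) ?_ ?_ ?_ ?_
  · intro T hT
    simp only [mem_filter] at hT ⊢
    exact ⟨comp_perm_mem_assignments hT.1 σ, by simpa [hσ, hσ'] using hT.2⟩
  · intro T hT
    simp only [mem_filter] at hT ⊢
    refine ⟨comp_perm_mem_assignments hT.1 σ.symm, ?_⟩
    rw [← hσ, ← hσ']
    simpa using hT.2
  · intro T _
    ext
    simp
  · intro T _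
    ext
    simp

theorem card_assignments_filter_pair_mul (j : J) {i i' : Fin N} (hi : i ≠ i') :
    #{T ∈ assignments N Nj | T i = j ∧ T i' = j} * N.descFactorial 2 =
      (Nj j).descFactorial 2 * #(assignments N Nj) := by
  have hcount := card_mul_eq_card_mul (s := assignments N Nj)
    (t := (univ : Finset (Fin N)).offDiag) (fun T p => T p.1 = j ∧ T p.2 = j)
    (m := (Nj j).descFactorial 2) (n := #{T ∈ assignments N Nj | T i = j ∧ T i' = j}) ?_ ?_
  · rw [card_offDiag_eq_descFactorial, card_univ, Fintype.card_fin] at hcount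
    linarith
  · intro T hT
    have hpairs : univ.offDiag.bipartiteAbove (fun T p => T p.1 = j ∧ T p.2 = j) T =
        ({i | T i = j} : Finset (Fin N)).offDiag := by
      ext p
      simp only [bipartiteAbove, mem_filter, mem_offDiag, mem_univ, true_and]
      tauto
    rw [hpairs, card_offDiag_eq_descFactorial, mem_assignments.1 hT j]
  · intro p hp
    exact card_assignments_filter_pair_eq j (mem_offDiag.1 hp).2.2 hi

theorem card_assignments_filter_pair_eq_mul_card (j : J) {i i' : Fin N} (hi : i ≠ i') :
    (#{T ∈ assignments N Nj | T i = j ∧ T i' = j} : ℝ) =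
      Nj j * (Nj j - 1) / (N * (N - 1)) * #(assignments N Nj) := by
  have hN : 1 < N := by simpa using Fintype.one_lt_card_iff.2 ⟨i, i', hi⟩
  have hcount := congrArg (Nat.cast (R := ℝ)) (card_assignments_filter_pair_mul (Nj := Nj) j hi)
  have hN' : (N : ℝ) * (N - 1) ≠ 0 := by
    rw [← Nat.cast_descFactorial_two]
    exact Nat.cast_ne_zero.2 (mt Nat.descFactorial_eq_zero_iff_lt.1 (not_lt.2 hN))
  push_cast [Nat.cast_descFactorial_two] at hcount
  rw [div_mul_eq_mul_div, eq_div_iff hN', hcount]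

theorem sum_assignments_sum_pairs_within_group (j : J) (d : Fin N × Fin N → ℝ)
    (hd : ∀ i, d (i, i) = 0) :
    ∑ T ∈ assignments N Nj, ∑ p with T p.1 = j ∧ T p.2 = j, d p =
      Nj j * (Nj j - 1) / (N * (N - 1)) * #(assignments N Nj) * ∑ p, d p := by
  rw [sum_sum_filter_eq_sum_card_nsmul, mul_sum]
  refine sum_congr rfl fun ⟨i, k⟩ _ => ?_
  rw [nsmul_eq_mul]
  rcases eq_or_ne i k with rfl | h
  · rw [hd, mul_zero, mul_zero]
  · rw [card_assignments_filter_pair_eq_mul_card j h]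

end Assignments

theorem S2_eq_sum_sum_sub_sq {N : ℕ} {J : Type*} (Y : Fin N → J → ℝ) (j : J) :
    S2 Y j = (∑ i, ∑ k, (Y i j - Y k j) ^ 2) / (2 * N * (N - 1)) := by
  have h := sum_sub_mean_sq_eq_sum_sum_sub_sq univ (Y · j)
  rw [card_univ, Fintype.card_fin] at h
  rw [S2, Pmean, h, div_div, mul_assoc]

theorem s2obs_eq_sum_sum_sub_sq {N : ℕ} {J : Type*} [DecidableEq J] (Y : Fin N → J → ℝ)
    (Nj : J → ℕ) (j : J) {T : Fin N → J} (hT : #{i | T i = j} = Nj j) :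
    s2obs Y Nj j T =
      (∑ i ∈ {i | T i = j}, ∑ k ∈ {i | T i = j}, (Y i j - Y k j) ^ 2) /
        (2 * Nj j * (Nj j - 1)) := by
  have h := sum_sub_mean_sq_eq_sum_sum_sub_sq {i | T i = j} (Y · j)
  rw [hT] at h
  rw [s2obs, pObs, h, div_div, mul_assoc]

theorem expect_s2obs_eq_S2_general {N J : ℕ}
    (Y : Fin N → Fin J → ℝ) (Nj : Fin J → ℕ)
    (hsum : ∑ j, Nj j = N) :
    ∀ j, 2 ≤ Nj j → expect Nj (s2obs Y Nj j) = S2 Y j := by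
  intro j hj
  have hNj : Nj j ≤ N := hsum ▸ single_le_sum (fun _ _ => Nat.zero_le _) (mem_univ j)
  have hn : (Nj j : ℝ) - 1 ≠ 0 := by
    have : (2 : ℝ) ≤ Nj j := by exact_mod_cast hj
    linarith
  have hN : (N : ℝ) - 1 ≠ 0 ∧ (N : ℝ) ≠ 0 := by
    have : (2 : ℝ) ≤ N := by exact_mod_cast hj.trans hNj
    constructor <;> linarith
  have hA : (#(assignments N Nj) : ℝ) ≠ 0 :=
    Nat.cast_ne_zero.2 (assignments_nonempty hsum).card_pos.ne'
  calc expect Nj (s2obs Y Nj j)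
      = (∑ T ∈ assignments N Nj, ∑ p : Fin N × Fin N with T p.1 = j ∧ T p.2 = j,
          (Y p.1 j - Y p.2 j) ^ 2) / (2 * Nj j * (Nj j - 1)) / #(assignments N Nj) := by
        rw [_root_.expect]
        congr 1
        rw [sum_div]
        refine sum_congr rfl fun T hT => ?_
        rw [s2obs_eq_sum_sum_sub_sq Y Nj j (mem_assignments.1 hT j), ← sum_product',
          ← filter_product, univ_product_univ]
    _ = S2 Y j := by
        rw [sum_assignments_sum_pairs_within_group j _ fun i => by simp, S2_eq_sum_sum_sub_sq,
          ← sum_product']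
        field_simp [hN.1, hN.2]
        rfl

/-- Unbiasedness of the sample variance under complete randomization: for every treatment
`j` with `N_j ≥ 2`, `E[s_j²] = S_j²`. -/
theorem expect_s2obs_eq_S2 {N J : ℕ} (hN : 2 ≤ N)
    (Y : Fin N → Fin J → ℝ) (Nj : Fin J → ℕ)
    (hpos : ∀ j, 1 ≤ Nj j) (hsum : ∑ j, Nj j = N) :
    ∀ j, 2 ≤ Nj j → expect Nj (s2obs Y Nj j) = S2 Y j :=
  expect_s2obs_eq_S2_general Y Nj hsum
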